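/- arXiv:2502.19753 — 2 statements merged into one kernel-verified Lean document; each statement's English description precedes it below -/
import Mathlib

section
/- Let n be an even positive integer, m a positive integer, and C a code of length m over ℤ/(n+1)ℤ. Then: (1) Γ_C is integral if and only if C ⊆ C^⊥; (2) Γ_C is unimodular if and only if C = C^⊥; (3) Γ_C is even if and only if C ⊆ C^⊥; (4) Γ_C is even unimodular if and only if C = C^⊥ (C is Euclidean self-dual). -/
open Finset

/-- The bilinear form of `m` copies of the dual `A_n` root lattice,
written in the dual basis. -/
noncomputable def BA (n m : ℕ) (x y : Fin m → Fin n → ℚ) : ℚ :=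
  ∑ i, ((∑ j, x i j * y i j) -
    (1 / ((n : ℚ) + 1)) * (∑ j, x i j) * (∑ j, y i j))

/-- The reduction map to `(ℤ/(n+1)ℤ)^m`. -/
def rhoA (n m : ℕ) (x : Fin m → Fin n → ℤ) : Fin m → ZMod (n + 1) :=
  fun i => ((∑ j, x i j : ℤ) : ZMod (n + 1))

/-- The Euclidean weight of an element of `(ℤ/(n+1)ℤ)^m`. -/
def wtE (n m : ℕ) (u : Fin m → ZMod (n + 1)) : ℕ :=
  ∑ i, (u i).val ^ 2

/-- The dual code of a set of codewords. -/
def dualCodeA (n m : ℕ) (C : Set (Fin m → ZMod (n + 1))) :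
    Set (Fin m → ZMod (n + 1)) :=
  {u | ∀ v ∈ C, ∑ i, u i * v i = 0}

/-- The lattice `Γ_C` constructed from the code `C`. -/
def GammaA (n m : ℕ) (C : Set (Fin m → ZMod (n + 1))) :
    Set (Fin m → Fin n → ℤ) :=
  {x | rhoA n m x ∈ C}

/-- Coercion of an integral vector to a rational vector. -/
def toQA (n m : ℕ) (x : Fin m → Fin n → ℤ) : Fin m → Fin n → ℚ :=
  fun i j => (x i j : ℚ)

/-- The dual lattice `Γ_C^*`, taken inside the `ℚ`-valued vectors. -/
noncomputable def dualLatticeA (n m : ℕ) (C : Set (Fin m → ZMod (n + 1))) :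
    Set (Fin m → Fin n → ℚ) :=
  {z | ∀ y ∈ GammaA n m C, ∃ k : ℤ, (k : ℚ) = BA n m z (toQA n m y)}

/-- `Γ_C` is integral. -/
def IsIntegralA (n m : ℕ) (C : Set (Fin m → ZMod (n + 1))) : Prop :=
  ∀ x ∈ GammaA n m C, ∀ y ∈ GammaA n m C,
    ∃ k : ℤ, (k : ℚ) = BA n m (toQA n m x) (toQA n m y)

/-- `Γ_C` is even. -/
def IsEvenLatA (n m : ℕ) (C : Set (Fin m → ZMod (n + 1))) : Prop :=
  IsIntegralA n m C ∧ ∀ x ∈ GammaA n m C,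
    ∃ k : ℤ, ((2 * k : ℤ) : ℚ) = BA n m (toQA n m x) (toQA n m x)

/-- `Γ_C` is unimodular. -/
def IsUnimodularA (n m : ℕ) (C : Set (Fin m → ZMod (n + 1))) : Prop :=
  dualLatticeA n m C = toQA n m '' GammaA n m C

/-! For integral `x, y` one has `(n + 1) B(x, y) ≡ -ρ(x)·ρ(y)` modulo `n + 1`, so `B(x, y) ∈ ℤ`
exactly when `ρ(x)·ρ(y) = 0`; as `ρ` is onto, this gives (1). The dual lattice is computed from
the identity `z_ij = B(z, y)` with `y = e_ij + (all-ones row i) ∈ ker ρ`: every `z ∈ Γ_C^*` is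
integral, and then `z ∈ Γ_C^*` iff `ρ(z) ∈ C^⊥`, i.e. `Γ_C^* = Γ_{C^⊥}`, which gives (2). For (3),
`B(x, x) = ∑ x_ij² - T` with `∑_i (∑_j x_ij)² = (n + 1) T`; as `n` is even, both `∑ x_ij²` and
`T` are congruent to `∑_i (∑_j x_ij)²` modulo `2`. -/

section
variable {n m : ℕ}

lemma BA_toQA (x y : Fin m → Fin n → ℤ) :
    BA n m (toQA n m x) (toQA n m y) =
      ((∑ i, ∑ j, x i j * y i j : ℤ) : ℚ) -
        ((∑ i, (∑ j, x i j) * (∑ j, y i j) : ℤ) : ℚ) / ((n : ℚ) + 1) := by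
  simp only [BA, toQA]
  push_cast
  rw [Finset.sum_div, ← Finset.sum_sub_distrib]
  exact Finset.sum_congr rfl fun i _ => by ring

lemma exists_intCast_eq_sub_div_iff (N : ℕ) (A S : ℤ) :
    (∃ k : ℤ, (k : ℚ) = A - S / ((N : ℚ) + 1)) ↔ ((N : ℤ) + 1) ∣ S := by
  have hN : ((N : ℚ) + 1) ≠ 0 := by positivity
  constructor
  · rintro ⟨k, hk⟩
    refine ⟨A - k, ?_⟩
    have : (S : ℚ) = ((N : ℚ) + 1) * (A - k) := by
      field_simp at hk ⊢
      linarith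
    exact_mod_cast this
  · rintro ⟨t, rfl⟩
    exact ⟨A - t, by push_cast; field_simp⟩

lemma sum_rhoA_mul_rhoA (x y : Fin m → Fin n → ℤ) :
    ∑ i, rhoA n m x i * rhoA n m y i =
      ((∑ i, (∑ j, x i j) * (∑ j, y i j) : ℤ) : ZMod (n + 1)) := by
  simp [rhoA]

lemma exists_intCast_eq_BA_iff (x y : Fin m → Fin n → ℤ) :
    (∃ k : ℤ, (k : ℚ) = BA n m (toQA n m x) (toQA n m y)) ↔
      ∑ i, rhoA n m x i * rhoA n m y i = 0 := by
  rw [BA_toQA, exists_intCast_eq_sub_div_iff, sum_rhoA_mul_rhoA,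
    ZMod.intCast_zmod_eq_zero_iff_dvd]
  push_cast
  rfl

lemma rhoA_surjective : Function.Surjective (rhoA n m) := by
  rcases Nat.eq_zero_or_pos n with rfl | hn
  · exact fun u => ⟨0, funext fun i => Subsingleton.elim (α := ZMod 1) _ _⟩
  · intro u
    refine ⟨fun i j => if j = ⟨0, hn⟩ then ((u i).val : ℤ) else 0, funext fun i => ?_⟩
    simp [rhoA, ZMod.natCast_val, ZMod.cast_id]

lemma toQA_injective : Function.Injective (toQA n m) :=
  fun _ _ h => funext₂ fun i j => by simpa [toQA] using congrFun₂ h i j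

lemma isIntegralA_iff (C : Set (Fin m → ZMod (n + 1))) :
    IsIntegralA n m C ↔ C ⊆ dualCodeA n m C := by
  simp only [IsIntegralA, GammaA, Set.mem_ofPred_eq, exists_intCast_eq_BA_iff]
  constructor
  · intro h u hu v hv
    obtain ⟨x, rfl⟩ := rhoA_surjective u
    obtain ⟨y, rfl⟩ := rhoA_surjective v
    exact h x hu y hv
  · exact fun h x hx y hy => h hx _ hy

def coordVecA (i : Fin m) (j : Fin n) : Fin m → Fin n → ℤ :=
  Pi.single i (1 + Pi.single j 1)

lemma rhoA_coordVecA (i : Fin m) (j : Fin n) : rhoA n m (coordVecA i j) = 0 := by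
  funext i'
  rcases eq_or_ne i' i with rfl | hi
  · simp [rhoA, coordVecA, Finset.sum_add_distrib, add_comm]
  · simp [rhoA, coordVecA, hi]

lemma BA_coordVecA (z : Fin m → Fin n → ℚ) (i : Fin m) (j : Fin n) :
    BA n m z (toQA n m (coordVecA i j)) = z i j := by
  have hN : ((n : ℚ) + 1) ≠ 0 := by positivity
  rw [BA, Finset.sum_eq_single i (fun i' _ hi => by simp [toQA, coordVecA, hi]) (by simp)]
  simp [toQA, coordVecA, mul_add, Finset.sum_add_distrib, add_comm, Pi.single_apply]
  field_simp
  ring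

lemma dualLatticeA_eq (C : Set (Fin m → ZMod (n + 1))) (h0 : 0 ∈ C) :
    dualLatticeA n m C = toQA n m '' GammaA n m (dualCodeA n m C) := by
  ext z
  constructor
  · intro hz
    have hint : ∀ i j, ∃ k : ℤ, (k : ℚ) = z i j := fun i j => by
      have hmem : coordVecA i j ∈ GammaA n m C := by
        simpa [GammaA, rhoA_coordVecA] using h0
      simpa [BA_coordVecA] using hz _ hmem
    choose w hw using hint
    obtain rfl : toQA n m w = z := funext₂ hw
    refine ⟨w, fun v hv => ?_, rfl⟩
    obtain ⟨x, rfl⟩ := rhoA_surjective v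
    exact (exists_intCast_eq_BA_iff w x).mp (hz x hv)
  · rintro ⟨w, hw, rfl⟩ y hy
    exact (exists_intCast_eq_BA_iff w y).mpr (hw _ hy)

lemma isUnimodularA_iff (C : Set (Fin m → ZMod (n + 1))) (h0 : 0 ∈ C) :
    IsUnimodularA n m C ↔ C = dualCodeA n m C := by
  rw [IsUnimodularA, dualLatticeA_eq C h0,
    (Set.image_injective.mpr toQA_injective).eq_iff, eq_comm]
  exact (Set.preimage_injective.mpr rhoA_surjective).eq_iff

lemma exists_two_mul_eq_BA_self (heven : Even n) (x : Fin m → Fin n → ℤ)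
    (hx : ∑ i, rhoA n m x i * rhoA n m x i = 0) :
    ∃ k : ℤ, ((2 * k : ℤ) : ℚ) = BA n m (toQA n m x) (toQA n m x) := by
  set A := ∑ i, ∑ j, x i j * x i j
  set S := ∑ i, (∑ j, x i j) * (∑ j, x i j)
  obtain ⟨T, hT⟩ : ((n : ℤ) + 1) ∣ S := by
    rw [sum_rhoA_mul_rhoA, ZMod.intCast_zmod_eq_zero_iff_dvd] at hx
    exact_mod_cast hx
  have mul_self_mod_two : ∀ a : ZMod 2, a * a = a := by decide
  have hAS : (A : ZMod 2) = S := by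
    simp only [A, S, Int.cast_sum, Int.cast_mul, mul_self_mod_two]
  have hST : (S : ZMod 2) = T := by
    have hn : (n : ZMod 2) = 0 := (ZMod.natCast_eq_zero_iff n 2).mpr heven.two_dvd
    rw [hT]
    push_cast
    rw [hn, zero_add, one_mul]
  obtain ⟨k, hk⟩ : (2 : ℤ) ∣ A - T := by
    refine (ZMod.intCast_zmod_eq_zero_iff_dvd _ 2).mp ?_
    rw [Int.cast_sub, hAS, hST, sub_self]
  refine ⟨k, ?_⟩
  have hN : ((n : ℚ) + 1) ≠ 0 := by positivity
  rw [BA_toQA]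
  change _ = (A : ℚ) - (S : ℚ) / _
  rw [← hk, hT]
  push_cast
  field_simp

lemma isEvenLatA_iff (heven : Even n) (C : Set (Fin m → ZMod (n + 1))) :
    IsEvenLatA n m C ↔ C ⊆ dualCodeA n m C := by
  rw [IsEvenLatA, isIntegralA_iff, and_iff_left_iff_imp]
  exact fun h x hx => exists_two_mul_eq_BA_self heven x (h hx _ hx)

end

theorem stmt5_general (n m : ℕ) (heven : Even n)
    (C : Submodule (ZMod (n + 1)) (Fin m → ZMod (n + 1))) :
    (IsIntegralA n m (C : Set _) ↔
        (C : Set _) ⊆ dualCodeA n m (C : Set _)) ∧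
    (IsUnimodularA n m (C : Set _) ↔
        (C : Set _) = dualCodeA n m (C : Set _)) ∧
    (IsEvenLatA n m (C : Set _) ↔
        (C : Set _) ⊆ dualCodeA n m (C : Set _)) ∧
    ((IsEvenLatA n m (C : Set _) ∧ IsUnimodularA n m (C : Set _)) ↔
        (C : Set _) = dualCodeA n m (C : Set _)) := by
  have unimodular := isUnimodularA_iff (C : Set (Fin m → ZMod (n + 1))) C.zero_mem
  have even := isEvenLatA_iff heven (C : Set (Fin m → ZMod (n + 1)))
  refine ⟨isIntegralA_iff _, unimodular, even, ?_⟩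
  rw [even, unimodular]
  exact ⟨And.right, fun h => ⟨h.subset, h⟩⟩

theorem stmt5 (n m : ℕ) (hn : 0 < n) (heven : Even n) (hm : 0 < m)
    (C : Submodule (ZMod (n + 1)) (Fin m → ZMod (n + 1))) :
    (IsIntegralA n m (C : Set _) ↔
        (C : Set _) ⊆ dualCodeA n m (C : Set _)) ∧
    (IsUnimodularA n m (C : Set _) ↔
        (C : Set _) = dualCodeA n m (C : Set _)) ∧
    (IsEvenLatA n m (C : Set _) ↔
        (C : Set _) ⊆ dualCodeA n m (C : Set _)) ∧
    ((IsEvenLatA n m (C : Set _) ∧ IsUnimodularA n m (C : Set _)) ↔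
        (C : Set _) = dualCodeA n m (C : Set _)) :=
  stmt5_general n m heven C
end

section
/- Let n ≥ 4 be an integer with n ≡ 0 (mod 4) and n ≢ 0 (mod 8), m a positive integer, and C a code of length m over R = 𝔽₂ + u𝔽₂. Then: (1) Γ_C is integral if and only if C ⊆ C^⊥; (2) Γ_C is unimodular if and only if C = C^⊥; (3) Γ_C is even if and only if 2 divides wt_H(w) for every w ∈ C; (4) Γ_C is even unimodular if and only if C is Type IV. -/
open Finset

/-- The ring `𝔽₂ + u𝔽₂` (dual numbers over `ℤ/2ℤ`, with `u² = 0`). -/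
abbrev R2 : Type := DualNumber (ZMod 2)

/-- The bilinear form of `m` copies of the dual `D_n` root lattice (`n` even),
written in the dual basis: `B(x,y) = Σ_i Σ_j Σ_s (1/4)(n − 2|j−s|) x_{ij} y_{is}`. -/
noncomputable def BDev (n m : ℕ) (x y : Fin m → Fin n → ℚ) : ℚ :=
  ∑ i, ∑ j : Fin n, ∑ s : Fin n,
    (1 / 4) * ((n : ℚ) - 2 * |((j : ℕ) : ℚ) - ((s : ℕ) : ℚ)|) * x i j * y i s

/-- `a_i(x)`: the sum of the odd-numbered (`1`-indexed) coordinates, mod 2. -/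
def aD (n m : ℕ) (x : Fin m → Fin n → ℤ) (i : Fin m) : ZMod 2 :=
  ((∑ j ∈ Finset.univ.filter (fun j : Fin n => (j : ℕ) % 2 = 0), x i j : ℤ) : ZMod 2)

/-- `b_i(x)`: the sum of the even-numbered (`1`-indexed) coordinates, mod 2. -/
def bD (n m : ℕ) (x : Fin m → Fin n → ℤ) (i : Fin m) : ZMod 2 :=
  ((∑ j ∈ Finset.univ.filter (fun j : Fin n => (j : ℕ) % 2 = 1), x i j : ℤ) : ZMod 2)

/-- The reduction map `ρ` to `(𝔽₂ + u𝔽₂)^m`, `ρ(x)_i = a_i + b_i(1+u)`. -/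
noncomputable def rhoDev (n m : ℕ) (x : Fin m → Fin n → ℤ) : Fin m → R2 :=
  fun i => algebraMap (ZMod 2) R2 (aD n m x i) +
    algebraMap (ZMod 2) R2 (bD n m x i) * (1 + DualNumber.eps)

open scoped Classical in
/-- `N₀`: the number of coordinates equal to `0`. -/
noncomputable def N0R (m : ℕ) (w : Fin m → R2) : ℕ :=
  (Finset.univ.filter (fun i => w i = 0)).card

open scoped Classical in
/-- `N₂`: the number of coordinates equal to `u`. -/
noncomputable def N2R (m : ℕ) (w : Fin m → R2) : ℕ :=
  (Finset.univ.filter (fun i => w i = DualNumber.eps)).card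

/-- `N₁ = m − N₀ − N₂`. -/
noncomputable def N1R (m : ℕ) (w : Fin m → R2) : ℕ :=
  m - N0R m w - N2R m w

/-- The Lee weight `wt_L = N₁ + 2N₂`. -/
noncomputable def wtLR (m : ℕ) (w : Fin m → R2) : ℕ :=
  N1R m w + 2 * N2R m w

/-- The Hamming weight `wt_H = N₁ + N₂`. -/
noncomputable def wtHR (m : ℕ) (w : Fin m → R2) : ℕ :=
  N1R m w + N2R m w

/-- The dual code of a set of codewords over `𝔽₂ + u𝔽₂`. -/
def dualCodeR (m : ℕ) (C : Set (Fin m → R2)) : Set (Fin m → R2) :=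
  {w | ∀ v ∈ C, ∑ i, w i * v i = 0}

/-- The lattice `Γ_C` constructed from the code `C`. -/
def GammaDev (n m : ℕ) (C : Set (Fin m → R2)) : Set (Fin m → Fin n → ℤ) :=
  {x | rhoDev n m x ∈ C}

/-- Coercion of an integral vector to a rational vector. -/
def toQD (n m : ℕ) (x : Fin m → Fin n → ℤ) : Fin m → Fin n → ℚ :=
  fun i j => (x i j : ℚ)

/-- The dual lattice `Γ_C^*`, taken inside the `ℚ`-valued vectors. -/
noncomputable def dualLatticeDev (n m : ℕ) (C : Set (Fin m → R2)) :
    Set (Fin m → Fin n → ℚ) :=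
  {z | ∀ y ∈ GammaDev n m C, ∃ k : ℤ, (k : ℚ) = BDev n m z (toQD n m y)}

/-- `Γ_C` is integral. -/
def IsIntegralDev (n m : ℕ) (C : Set (Fin m → R2)) : Prop :=
  ∀ x ∈ GammaDev n m C, ∀ y ∈ GammaDev n m C,
    ∃ k : ℤ, (k : ℚ) = BDev n m (toQD n m x) (toQD n m y)

/-- `Γ_C` is even. -/
def IsEvenLatDev (n m : ℕ) (C : Set (Fin m → R2)) : Prop :=
  IsIntegralDev n m C ∧ ∀ x ∈ GammaDev n m C,
    ∃ k : ℤ, ((2 * k : ℤ) : ℚ) = BDev n m (toQD n m x) (toQD n m x)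

/-- `Γ_C` is unimodular. -/
def IsUnimodularDev (n m : ℕ) (C : Set (Fin m → R2)) : Prop :=
  dualLatticeDev n m C = toQD n m '' GammaDev n m C

-- ===== auxiliary lemmas =====
section Aux

lemma sum_if_eq {α : Type*} [Fintype α] [DecidableEq α] {M : Type*} [AddCommMonoid M]
    (e : α) (f : α → M) : ∑ s : α, (if s = e then f s else 0) = f e := by
  rw [Finset.sum_ite_eq' Finset.univ e f]; simp

lemma sum_split {k : ℕ} {M : Type*} [AddCommMonoid M] (f : Fin k → Fin k → M) :
    ∑ j, ∑ s, f j s =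
      (∑ j, ∑ s, (if j < s then f j s + f s j else 0)) + ∑ j, f j j := by
  have base : ∀ j s : Fin k, f j s =
      (if j < s then f j s else 0) + (if s < j then f j s else 0) +
        (if j = s then f j s else 0) := by
    intro j s
    rcases lt_trichotomy j s with h | h | h
    · simp [h, not_lt.2 h.le, h.ne]
    · simp [h]
    · simp [h, not_lt.2 h.le, (ne_of_gt h)]
  calc ∑ j, ∑ s, f j s
      = ∑ j, ∑ s, ((if j < s then f j s else 0) + (if s < j then f j s else 0) +
          (if j = s then f j s else 0)) := by
        refine Finset.sum_congr rfl fun j _ => Finset.sum_congr rfl fun s _ => ?_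
        exact base j s
    _ = ((∑ j, ∑ s, (if j < s then f j s else 0)) +
          ∑ j, ∑ s, (if s < j then f j s else 0)) +
          ∑ j, ∑ s, (if j = s then f j s else 0) := by
        simp [Finset.sum_add_distrib]
    _ = (∑ j, ∑ s, (if j < s then f j s + f s j else 0)) + ∑ j, f j j := by
        have h1 : ∑ j, ∑ s, (if s < j then f j s else 0)
            = ∑ j, ∑ s, (if j < s then f s j else 0) := Finset.sum_comm
        rw [h1]
        have h2 : ∀ j : Fin k, ∑ s, (if j = s then f j s else 0) = f j j := by
          intro j
          have := sum_if_eq (M := M) j (fun s => f j s)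
          simpa [eq_comm] using this
        rw [Finset.sum_congr rfl fun j _ => h2 j]
        congr 1
        rw [← Finset.sum_add_distrib]
        refine Finset.sum_congr rfl fun j _ => ?_
        rw [← Finset.sum_add_distrib]
        refine Finset.sum_congr rfl fun s _ => ?_
        by_cases h : j < s <;> simp [h]

lemma sum_eq_twice {k : ℕ} (f : Fin k → Fin k → ℤ)
    (hsymm : ∀ j s, f j s = f s j) (hdiag : ∀ j, f j j = 0) :
    ∑ j, ∑ s, f j s = 2 * ∑ j, ∑ s, (if j < s then f j s else 0) := by
  rw [sum_split f]
  simp only [hdiag, Finset.sum_const_zero, add_zero, Finset.mul_sum]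
  refine Finset.sum_congr rfl fun j _ => Finset.sum_congr rfl fun s _ => ?_
  by_cases h : j < s
  · simp only [h, if_true, ← hsymm j s]; ring
  · simp [h]

lemma half_sum {k : ℕ} (g h : Fin k → Fin k → ZMod 2)
    (hgh : ∀ j s, g j s = h j s + h s j) (hdiag : ∀ j, h j j = 0) :
    ∑ j, ∑ s, (if j < s then g j s else 0) = ∑ j, ∑ s, h j s := by
  rw [sum_split h]
  simp only [hdiag, Finset.sum_const_zero, add_zero]
  refine (Finset.sum_congr rfl fun j _ => Finset.sum_congr rfl fun s _ => ?_).symm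
  by_cases hlt : j < s <;> simp [hlt, hgh j s]

lemma natCast_zmod2 (k : ℕ) : ((k : ZMod 2)) = if k % 2 = 1 then 1 else 0 := by
  rw [← ZMod.natCast_mod]
  rcases Nat.mod_two_eq_zero_or_one k with h | h <;> rw [h] <;> simp

lemma absCast_zmod2 (z : ℤ) : ((|z| : ℤ) : ZMod 2) = (z : ZMod 2) := by
  rcases abs_choice z with h | h <;> rw [h]
  push_cast
  ring_nf
  exact (CharTwo.neg_eq _)

lemma zmod2_sq (v : ZMod 2) : v * v = v := by revert v; decide

end Aux
section Aux2
variable {n m : ℕ}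

lemma aD_eq (x : Fin m → Fin n → ℤ) (i : Fin m) :
    aD n m x i = ∑ j : Fin n, (if (j : ℕ) % 2 = 0 then ((x i j : ℤ) : ZMod 2) else 0) := by
  rw [aD, Int.cast_sum, Finset.sum_filter]

lemma bD_eq (x : Fin m → Fin n → ℤ) (i : Fin m) :
    bD n m x i = ∑ j : Fin n, (if (j : ℕ) % 2 = 1 then ((x i j : ℤ) : ZMod 2) else 0) := by
  rw [bD, Int.cast_sum, Finset.sum_filter]

lemma sum_cast_eq (x : Fin m → Fin n → ℤ) (i : Fin m) :
    ∑ j : Fin n, ((x i j : ℤ) : ZMod 2) = aD n m x i + bD n m x i := by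
  rw [aD_eq, bD_eq, ← Finset.sum_add_distrib]
  refine Finset.sum_congr rfl fun j _ => ?_
  rcases Nat.mod_two_eq_zero_or_one (j : ℕ) with h | h <;> simp [h]

lemma sum_jcast_eq (x : Fin m → Fin n → ℤ) (i : Fin m) :
    ∑ j : Fin n, (((j : ℕ) : ZMod 2)) * ((x i j : ℤ) : ZMod 2) = bD n m x i := by
  rw [bD_eq]
  refine Finset.sum_congr rfl fun j _ => ?_
  rw [natCast_zmod2]
  rcases Nat.mod_two_eq_zero_or_one (j : ℕ) with h | h <;> simp [h]

lemma rho_fst (x : Fin m → Fin n → ℤ) (i : Fin m) :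
    (rhoDev n m x i).fst = aD n m x i + bD n m x i := by
  simp [rhoDev, TrivSqZeroExt.algebraMap_eq_inl]

lemma rho_snd (x : Fin m → Fin n → ℤ) (i : Fin m) :
    (rhoDev n m x i).snd = bD n m x i := by
  simp [rhoDev, TrivSqZeroExt.algebraMap_eq_inl]

lemma R2_ext_iff (w : R2) : w = 0 ↔ w.fst = 0 ∧ w.snd = 0 := by
  constructor
  · rintro rfl; simp
  · rintro ⟨h1, h2⟩
    exact TrivSqZeroExt.ext h1 h2

lemma rho_eq_zero_iff (x : Fin m → Fin n → ℤ) (i : Fin m) :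
    rhoDev n m x i = 0 ↔ (aD n m x i = 0 ∧ bD n m x i = 0) := by
  rw [R2_ext_iff, rho_fst, rho_snd]
  constructor
  · rintro ⟨h1, h2⟩
    refine ⟨?_, h2⟩
    rwa [h2, add_zero] at h1
  · rintro ⟨h1, h2⟩
    simp [h1, h2]

lemma mul_snd (w v : R2) : (w * v).snd = w.fst * v.snd + w.snd * v.fst := by
  simp [TrivSqZeroExt.snd_mul]

lemma dot_snd (x y : Fin m → Fin n → ℤ) :
    (∑ i, rhoDev n m x i * rhoDev n m y i).snd
      = ∑ i, (aD n m x i * bD n m y i + bD n m x i * aD n m y i) := by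
  rw [TrivSqZeroExt.snd_sum]
  refine Finset.sum_congr rfl fun i _ => ?_
  show (rhoDev n m x i * rhoDev n m y i).snd = _
  rw [mul_snd, rho_fst, rho_snd, rho_fst, rho_snd]
  ring_nf
  rw [show ((2:ZMod 2) = 0) by decide]
  ring

lemma dot_fst (x y : Fin m → Fin n → ℤ) :
    (∑ i, rhoDev n m x i * rhoDev n m y i).fst
      = ∑ i, (aD n m x i + bD n m x i) * (aD n m y i + bD n m y i) := by
  rw [TrivSqZeroExt.fst_sum]
  refine Finset.sum_congr rfl fun i _ => ?_
  show (rhoDev n m x i * rhoDev n m y i).fst = _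
  rw [TrivSqZeroExt.fst_mul, rho_fst, rho_fst]

lemma aD_add (x y : Fin m → Fin n → ℤ) (i : Fin m) :
    aD n m (x + y) i = aD n m x i + aD n m y i := by
  simp [aD_eq, ← Finset.sum_add_distrib, ite_add_ite]
lemma bD_add (x y : Fin m → Fin n → ℤ) (i : Fin m) :
    bD n m (x + y) i = bD n m x i + bD n m y i := by
  simp [bD_eq, ← Finset.sum_add_distrib, ite_add_ite]

lemma rho_add (x y : Fin m → Fin n → ℤ) :
    rhoDev n m (x + y) = rhoDev n m x + rhoDev n m y := by
  funext i
  refine TrivSqZeroExt.ext ?_ ?_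
  · rw [Pi.add_apply, TrivSqZeroExt.fst_add, rho_fst, rho_fst, rho_fst, aD_add, bD_add]; ring
  · rw [Pi.add_apply, TrivSqZeroExt.snd_add, rho_snd, rho_snd, rho_snd, bD_add]

end Aux2
section Aux3
variable {n m : ℕ}

lemma rho_surj (hn : 2 ≤ n) (w : Fin m → R2) : ∃ x : Fin m → Fin n → ℤ, rhoDev n m x = w := by
  refine ⟨fun i j => if (j : ℕ) = 0 then (((w i).fst + (w i).snd).val : ℤ)
    else if (j : ℕ) = 1 then (((w i).snd).val : ℤ) else 0, ?_⟩
  have f0 : (⟨0, by omega⟩ : Fin n) = (⟨0, by omega⟩ : Fin n) := rfl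
  have haD : ∀ i, aD n m (fun i j => if (j : ℕ) = 0 then (((w i).fst + (w i).snd).val : ℤ)
      else if (j : ℕ) = 1 then (((w i).snd).val : ℤ) else 0) i = (w i).fst + (w i).snd := by
    intro i
    rw [aD_eq]
    have : ∀ j : Fin n, (if (j : ℕ) % 2 = 0 then
        (((if (j : ℕ) = 0 then (((w i).fst + (w i).snd).val : ℤ)
          else if (j : ℕ) = 1 then (((w i).snd).val : ℤ) else 0) : ℤ) : ZMod 2) else 0)
        = (if j = (⟨0, by omega⟩ : Fin n) then ((((w i).fst + (w i).snd).val : ℤ) : ZMod 2) else 0) := by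
      intro j
      by_cases h0 : j = (⟨0, by omega⟩ : Fin n)
      · subst h0; simp
      · have h0' : (j : ℕ) ≠ 0 := by
          intro hc; exact h0 (Fin.ext hc)
        by_cases h1 : (j : ℕ) = 1
        · simp [h0', h1, Fin.ext_iff]
        · simp [h0', h1, Fin.ext_iff]
    rw [Finset.sum_congr rfl fun j _ => this j, sum_if_eq]
    push_cast
    simp [ZMod.natCast_val]
  have hbD : ∀ i, bD n m (fun i j => if (j : ℕ) = 0 then (((w i).fst + (w i).snd).val : ℤ)
      else if (j : ℕ) = 1 then (((w i).snd).val : ℤ) else 0) i = (w i).snd := by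
    intro i
    rw [bD_eq]
    have : ∀ j : Fin n, (if (j : ℕ) % 2 = 1 then
        (((if (j : ℕ) = 0 then (((w i).fst + (w i).snd).val : ℤ)
          else if (j : ℕ) = 1 then (((w i).snd).val : ℤ) else 0) : ℤ) : ZMod 2) else 0)
        = (if j = (⟨1, by omega⟩ : Fin n) then ((((w i).snd).val : ℤ) : ZMod 2) else 0) := by
      intro j
      by_cases h1 : j = (⟨1, by omega⟩ : Fin n)
      · subst h1; simp
      · have h1' : (j : ℕ) ≠ 1 := by
          intro hc; exact h1 (Fin.ext hc)
        by_cases h0 : (j : ℕ) = 0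
        · simp [h0, h1', Fin.ext_iff]
        · rcases Nat.mod_two_eq_zero_or_one (j : ℕ) with h | h <;> simp [h0, h1', h, Fin.ext_iff]
    rw [Finset.sum_congr rfl fun j _ => this j, sum_if_eq]
    push_cast
    simp [ZMod.natCast_val]
  funext i
  refine TrivSqZeroExt.ext ?_ ?_
  · rw [rho_fst, haD, hbD]
    rw [show ∀ a b : ZMod 2, a + b + b = a by decide]
  · rw [rho_snd, hbD]

end Aux3
section Aux4
variable {n m : ℕ}

/-- `4 B(x,y)` as an integer. -/
def FD (n m : ℕ) (x y : Fin m → Fin n → ℤ) : ℤ :=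
  ∑ i, ∑ j : Fin n, ∑ s : Fin n,
    ((n : ℤ) - 2 * |((j : ℕ) : ℤ) - ((s : ℕ) : ℤ)|) * x i j * y i s

def TD (n m : ℕ) (x y : Fin m → Fin n → ℤ) : ℤ :=
  ∑ i, ∑ j : Fin n, ∑ s : Fin n,
    |((j : ℕ) : ℤ) - ((s : ℕ) : ℤ)| * x i j * y i s

def UD (n m : ℕ) (x : Fin m → Fin n → ℤ) : ℤ :=
  ∑ i, ∑ j : Fin n, ∑ s : Fin n,
    (if j < s then (((s : ℕ) : ℤ) - ((j : ℕ) : ℤ)) * x i j * x i s else 0)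

lemma fourB (x y : Fin m → Fin n → ℤ) :
    4 * BDev n m (toQD n m x) (toQD n m y) = ((FD n m x y : ℤ) : ℚ) := by
  rw [BDev, FD, Finset.mul_sum]
  push_cast
  refine Finset.sum_congr rfl fun i _ => ?_
  rw [Finset.mul_sum]
  refine Finset.sum_congr rfl fun j _ => ?_
  rw [Finset.mul_sum]
  refine Finset.sum_congr rfl fun s _ => ?_
  rw [toQD, toQD]
  ring

lemma exists_int_iff (x y : Fin m → Fin n → ℤ) :
    (∃ k : ℤ, (k : ℚ) = BDev n m (toQD n m x) (toQD n m y)) ↔ (4 : ℤ) ∣ FD n m x y := by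
  constructor
  · rintro ⟨k, hk⟩
    refine ⟨k, ?_⟩
    have : ((FD n m x y : ℤ) : ℚ) = ((4 * k : ℤ) : ℚ) := by
      rw [← fourB, ← hk]; push_cast; ring
    exact_mod_cast this
  · rintro ⟨k, hk⟩
    refine ⟨k, ?_⟩
    have h4 := fourB (n := n) (m := m) x y
    rw [hk] at h4
    push_cast at h4
    linarith

lemma exists_even_iff (x : Fin m → Fin n → ℤ) :
    (∃ k : ℤ, ((2 * k : ℤ) : ℚ) = BDev n m (toQD n m x) (toQD n m x)) ↔
      (8 : ℤ) ∣ FD n m x x := by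
  constructor
  · rintro ⟨k, hk⟩
    refine ⟨k, ?_⟩
    have : ((FD n m x x : ℤ) : ℚ) = ((8 * k : ℤ) : ℚ) := by
      rw [← fourB, ← hk]; push_cast; ring
    exact_mod_cast this
  · rintro ⟨k, hk⟩
    refine ⟨k, ?_⟩
    have h4 := fourB (n := n) (m := m) x x
    rw [hk] at h4
    push_cast at h4 ⊢
    linarith

lemma FD_eq (x y : Fin m → Fin n → ℤ) :
    FD n m x y = (n : ℤ) * (∑ i, (∑ j, x i j) * (∑ s, y i s)) - 2 * TD n m x y := by
  rw [FD, TD, Finset.mul_sum, Finset.mul_sum, ← Finset.sum_sub_distrib]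
  refine Finset.sum_congr rfl fun i _ => ?_
  rw [Finset.sum_mul, Finset.mul_sum, Finset.mul_sum, ← Finset.sum_sub_distrib]
  refine Finset.sum_congr rfl fun j _ => ?_
  rw [Finset.mul_sum, Finset.mul_sum, Finset.mul_sum, ← Finset.sum_sub_distrib]
  refine Finset.sum_congr rfl fun s _ => ?_
  ring

lemma TD_cast (x y : Fin m → Fin n → ℤ) :
    ((TD n m x y : ℤ) : ZMod 2) = ∑ i, (aD n m x i * bD n m y i + bD n m x i * aD n m y i) := by
  rw [TD]
  push_cast [absCast_zmod2]
  refine Finset.sum_congr rfl fun i _ => ?_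
  have : ∀ j : Fin n, ∀ s : Fin n,
      ((((j : ℕ) : ℤ) - ((s : ℕ) : ℤ) : ZMod 2)) * ((x i j : ℤ) : ZMod 2) * ((y i s : ℤ) : ZMod 2)
      = (((j : ℕ) : ZMod 2)) * ((x i j : ℤ) : ZMod 2) * ((y i s : ℤ) : ZMod 2)
        + ((x i j : ℤ) : ZMod 2) * ((((s : ℕ) : ZMod 2)) * ((y i s : ℤ) : ZMod 2)) := by
    intro j s
    rw [CharTwo.sub_eq_add]
    push_cast
    ring
  calc ∑ j : Fin n, ∑ s : Fin n, ((((j:ℕ):ℤ) - ((s:ℕ):ℤ) : ZMod 2)) * ((x i j : ℤ) : ZMod 2) * ((y i s : ℤ) : ZMod 2)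
      = ∑ j : Fin n, ∑ s : Fin n, ((((j : ℕ) : ZMod 2)) * ((x i j : ℤ) : ZMod 2) * ((y i s : ℤ) : ZMod 2)
        + ((x i j : ℤ) : ZMod 2) * ((((s : ℕ) : ZMod 2)) * ((y i s : ℤ) : ZMod 2))) := by
        exact Finset.sum_congr rfl fun j _ => Finset.sum_congr rfl fun s _ => this j s
    _ = (∑ j : Fin n, (((j : ℕ) : ZMod 2)) * ((x i j : ℤ) : ZMod 2)) * (∑ s : Fin n, ((y i s : ℤ) : ZMod 2))
        + (∑ j : Fin n, ((x i j : ℤ) : ZMod 2)) * (∑ s : Fin n, (((s : ℕ) : ZMod 2)) * ((y i s : ℤ) : ZMod 2)) := by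
        rw [Finset.sum_mul, Finset.sum_mul, ← Finset.sum_add_distrib]
        refine Finset.sum_congr rfl fun j _ => ?_
        rw [Finset.mul_sum, Finset.mul_sum, ← Finset.sum_add_distrib]
    _ = aD n m x i * bD n m y i + bD n m x i * aD n m y i := by
        rw [sum_jcast_eq, sum_cast_eq, sum_jcast_eq, sum_cast_eq]
        rw [show ∀ a b c d : ZMod 2, b * (c + d) + (a + b) * d = a * d + b * c + 2 * (b * d) by decide]
        rw [show ((2 : ZMod 2) = 0) by decide]
        ring

lemma int_iff (hn4 : 4 ∣ n) (x y : Fin m → Fin n → ℤ) :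
    (∃ k : ℤ, (k : ℚ) = BDev n m (toQD n m x) (toQD n m y)) ↔
      ∑ i, (aD n m x i * bD n m y i + bD n m x i * aD n m y i) = 0 := by
  rw [exists_int_iff, ← TD_cast]
  obtain ⟨n', rfl⟩ := hn4
  rw [FD_eq]
  have : ((4 * n' : ℕ) : ℤ) = 4 * (n' : ℤ) := by push_cast; ring
  rw [this]
  rw [show ((TD (4 * n') m x y : ℤ) : ZMod 2) = 0 ↔ (2 : ℤ) ∣ TD (4 * n') m x y from
    ZMod.intCast_zmod_eq_zero_iff_dvd _ 2]
  have hA : 4 * (n' : ℤ) * (∑ i, (∑ j, x i j) * (∑ s, y i s))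
      = 4 * ((n' : ℤ) * (∑ i, (∑ j, x i j) * (∑ s, y i s))) := by ring
  rw [hA]
  set P := (n' : ℤ) * (∑ i, (∑ j, x i j) * (∑ s, y i s)) with hP
  constructor
  · rintro ⟨k, hk⟩
    exact ⟨P - k, by omega⟩
  · rintro ⟨k, hk⟩
    exact ⟨P - k, by omega⟩

end Aux4
section Aux5
variable {n m : ℕ}

lemma TD_diag (x : Fin m → Fin n → ℤ) : TD n m x x = 2 * UD n m x := by
  rw [TD, UD, Finset.mul_sum]
  refine Finset.sum_congr rfl fun i _ => ?_
  have hsymm : ∀ j s : Fin n, |((j : ℕ) : ℤ) - ((s : ℕ) : ℤ)| * x i j * x i s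
      = |((s : ℕ) : ℤ) - ((j : ℕ) : ℤ)| * x i s * x i j := by
    intro j s; rw [abs_sub_comm]; ring
  have hdiag : ∀ j : Fin n, |((j : ℕ) : ℤ) - ((j : ℕ) : ℤ)| * x i j * x i j = 0 := by
    intro j; simp
  rw [sum_eq_twice (fun j s => |((j : ℕ) : ℤ) - ((s : ℕ) : ℤ)| * x i j * x i s) hsymm hdiag]
  congr 1
  refine Finset.sum_congr rfl fun j _ => Finset.sum_congr rfl fun s _ => ?_
  by_cases h : j < s
  · have hjs : ((j : ℕ) : ℤ) ≤ ((s : ℕ) : ℤ) := by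
      have := (Fin.lt_iff_val_lt_val.mp h); omega
    rw [if_pos h, if_pos h, abs_of_nonpos (by omega), neg_sub]
  · rw [if_neg h, if_neg h]

lemma UD_cast (x : Fin m → Fin n → ℤ) :
    ((UD n m x : ℤ) : ZMod 2) = ∑ i, aD n m x i * bD n m x i := by
  have first : ((UD n m x : ℤ) : ZMod 2) = ∑ i, ∑ j : Fin n, ∑ s : Fin n,
      (if j < s then (((j : ℕ) : ZMod 2) + ((s : ℕ) : ZMod 2)) * ((x i j : ℤ) : ZMod 2) * ((x i s : ℤ) : ZMod 2) else 0) := by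
    rw [UD]
    push_cast [apply_ite (fun z : ℤ => (z : ZMod 2))]
    refine Finset.sum_congr rfl fun i _ => Finset.sum_congr rfl fun j _ => Finset.sum_congr rfl fun s _ => ?_
    by_cases h : j < s
    · simp only [h, if_true]
      push_cast
      rw [CharTwo.sub_eq_add]
      ring
    · simp [h]
  rw [first]
  refine Finset.sum_congr rfl fun i _ => ?_
  calc ∑ j : Fin n, ∑ s : Fin n, (if j < s then (((j : ℕ) : ZMod 2) + ((s : ℕ) : ZMod 2)) * ((x i j : ℤ) : ZMod 2) * ((x i s : ℤ) : ZMod 2) else 0)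
      = ∑ j : Fin n, ∑ s : Fin n, ((1 + ((j : ℕ) : ZMod 2)) * ((x i j : ℤ) : ZMod 2)) * ((((s : ℕ) : ZMod 2)) * ((x i s : ℤ) : ZMod 2)) := by
        refine half_sum _ _ (fun j s => ?_) (fun j => ?_)
        · rw [show ∀ (a b u v : ZMod 2), (a + b) * u * v = (1+a)*u*(b*v) + (1+b)*v*(a*u) by decide]
        · rw [show ∀ (a u : ZMod 2), (1+a)*u*(a*u) = 0 by decide]
    _ = (∑ j : Fin n, (1 + ((j : ℕ) : ZMod 2)) * ((x i j : ℤ) : ZMod 2)) * (∑ s : Fin n, (((s : ℕ) : ZMod 2)) * ((x i s : ℤ) : ZMod 2)) := by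
        rw [Finset.sum_mul_sum]
    _ = aD n m x i * bD n m x i := by
        have : ∑ j : Fin n, (1 + ((j : ℕ) : ZMod 2)) * ((x i j : ℤ) : ZMod 2)
            = (∑ j : Fin n, ((x i j : ℤ) : ZMod 2)) + ∑ j : Fin n, (((j : ℕ) : ZMod 2)) * ((x i j : ℤ) : ZMod 2) := by
          rw [← Finset.sum_add_distrib]
          exact Finset.sum_congr rfl fun j _ => by ring
        rw [this, sum_cast_eq, sum_jcast_eq]
        rw [show ∀ a b : ZMod 2, (a + b + b) * b = a * b by decide]

lemma even_iff (hn4 : 4 ∣ n) (hn8 : ¬ (8 ∣ n)) (x : Fin m → Fin n → ℤ) :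
    (∃ k : ℤ, ((2 * k : ℤ) : ℚ) = BDev n m (toQD n m x) (toQD n m x)) ↔
      ∑ i, (aD n m x i + bD n m x i + aD n m x i * bD n m x i) = 0 := by
  rw [exists_even_iff, FD_eq, TD_diag]
  obtain ⟨n', rfl⟩ := hn4
  have hodd : n' % 2 = 1 := by omega
  have key : ((4 * n' : ℕ) : ℤ) * (∑ i, (∑ j, x i j) * (∑ s, x i s)) - 2 * (2 * UD (4*n') m x)
      = 4 * ((n' : ℤ) * (∑ i, (∑ j, x i j) * (∑ s, x i s)) - UD (4*n') m x) := by
    push_cast; ring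
  rw [key]
  set G := (n' : ℤ) * (∑ i, (∑ j, x i j) * (∑ s, x i s)) - UD (4*n') m x with hG
  have h8 : (8 : ℤ) ∣ 4 * G ↔ (2 : ℤ) ∣ G := by
    constructor
    · rintro ⟨k, hk⟩; exact ⟨G - k, by omega⟩
    · rintro ⟨k, hk⟩; exact ⟨k, by omega⟩
  rw [h8, show ((2:ℤ) ∣ G) ↔ (((G : ℤ) : ZMod 2) = 0) from (ZMod.intCast_zmod_eq_zero_iff_dvd _ 2).symm]
  have hGcast : ((G : ℤ) : ZMod 2) = ∑ i, (aD (4*n') m x i + bD (4*n') m x i + aD (4*n') m x i * bD (4*n') m x i) := by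
    rw [hG]
    push_cast [UD_cast]
    have hn'1 : ((n' : ℕ) : ZMod 2) = 1 := by
      rw [natCast_zmod2, hodd]; simp
    rw [hn'1, one_mul, CharTwo.sub_eq_add, ← Finset.sum_add_distrib]
    refine Finset.sum_congr rfl fun i _ => ?_
    rw [sum_cast_eq, zmod2_sq]
  rw [hGcast]

end Aux5
section Aux6
variable {n m : ℕ}

/-- Row `t` of the inverse Gram matrix: the coordinates of `f_t ∈ D_n` in the dual basis. -/
def wv (n : ℕ) (t s : Fin n) : ℤ :=
  (if s = t then 2 else 0)
  - (if (s : ℕ) + 1 = (t : ℕ) ∨ (t : ℕ) + 1 = (s : ℕ) then 1 else 0)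
  + (if ((s : ℕ) = 0 ∧ (t : ℕ) + 1 = n) ∨ ((s : ℕ) + 1 = n ∧ (t : ℕ) = 0) then 1 else 0)

lemma sum_if_if {M : Type*} [AddCommMonoid M] (P : Fin n → Prop) [DecidablePred P]
    (e : Fin n) (k : M) :
    ∑ s : Fin n, (if P s then (if s = e then k else 0) else 0) = if P e then k else 0 := by
  have h : ∀ s : Fin n, (if P s then (if s = e then k else 0) else 0)
      = (if s = e then (if P e then k else 0) else 0) := by
    intro s
    by_cases hs : s = e
    · subst hs; simp
    · simp [hs]
  rw [Finset.sum_congr rfl fun s _ => h s, sum_if_eq]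

lemma wv_decomp_mid (t : Fin n) (h0 : 1 ≤ (t : ℕ)) (h1 : (t : ℕ) + 2 ≤ n) (s : Fin n) :
    wv n t s = 2 * (if s = t then 1 else 0)
      - (if s = (⟨(t : ℕ) - 1, by omega⟩ : Fin n) then 1 else 0)
      - (if s = (⟨(t : ℕ) + 1, by omega⟩ : Fin n) then 1 else 0) := by
  have hs := s.isLt
  simp only [wv, Fin.ext_iff]
  split_ifs <;> omega

lemma wv_decomp_zero (hn : 4 ≤ n) (t : Fin n) (h0 : (t : ℕ) = 0) (s : Fin n) :
    wv n t s = 2 * (if s = t then 1 else 0)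
      - (if s = (⟨1, by omega⟩ : Fin n) then 1 else 0)
      + (if s = (⟨n - 1, by omega⟩ : Fin n) then 1 else 0) := by
  have hs := s.isLt
  simp only [wv, Fin.ext_iff]
  split_ifs <;> omega

lemma wv_decomp_last (hn : 4 ≤ n) (t : Fin n) (hl : (t : ℕ) + 1 = n) (s : Fin n) :
    wv n t s = 2 * (if s = t then 1 else 0)
      - (if s = (⟨n - 2, by omega⟩ : Fin n) then 1 else 0)
      + (if s = (⟨0, by omega⟩ : Fin n) then 1 else 0) := by
  have hs := s.isLt
  simp only [wv, Fin.ext_iff]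
  split_ifs <;> omega

lemma sum_filter_combo (P : Fin n → Prop) [DecidablePred P] (e1 e2 e3 : Fin n) (c3 : ℤ)
    (f : Fin n → ℤ)
    (hf : ∀ s, f s = 2 * (if s = e1 then 1 else 0) - (if s = e2 then 1 else 0)
      + c3 * (if s = e3 then 1 else 0)) :
    ∑ s : Fin n, (if P s then f s else 0)
      = 2 * (if P e1 then (1:ℤ) else 0) - (if P e2 then 1 else 0) + c3 * (if P e3 then 1 else 0) := by
  have key : ∀ s : Fin n, (if P s then f s else 0)
      = 2 * (if P s then (if s = e1 then (1:ℤ) else 0) else 0)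
        - (if P s then (if s = e2 then 1 else 0) else 0)
        + c3 * (if P s then (if s = e3 then 1 else 0) else 0) := by
    intro s
    by_cases h : P s
    · simp only [h, if_true, hf s]
    · simp [h]
  rw [Finset.sum_congr rfl fun s _ => key s]
  rw [Finset.sum_add_distrib, Finset.sum_sub_distrib, ← Finset.mul_sum, ← Finset.mul_sum,
    sum_if_if, sum_if_if, sum_if_if]

lemma wv_parity (hn4 : 4 ∣ n) (hn : 4 ≤ n) (t : Fin n) (r : ℕ) :
    ((∑ s ∈ Finset.univ.filter (fun s : Fin n => (s : ℕ) % 2 = r), wv n t s : ℤ) : ZMod 2) = 0 := by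
  have ht := t.isLt
  rw [Finset.sum_filter]
  have main : (2:ℤ) ∣ ∑ s : Fin n, (if (s : ℕ) % 2 = r then wv n t s else 0) := by
    by_cases h0 : (t : ℕ) = 0
    · rw [sum_filter_combo _ t (⟨1, by omega⟩ : Fin n) (⟨n - 1, by omega⟩ : Fin n) 1 _
        (fun s => by rw [wv_decomp_zero hn t h0 s]; ring)]
      have hBC : (if ((⟨1, by omega⟩ : Fin n) : ℕ) % 2 = r then (1:ℤ) else 0)
          = (if ((⟨n - 1, by omega⟩ : Fin n) : ℕ) % 2 = r then (1:ℤ) else 0) :=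
        if_congr (by simp only []; omega) rfl rfl
      rw [hBC]
      by_cases hA : ((t : ℕ) % 2 = r) <;>
        by_cases hB : (((⟨n - 1, by omega⟩ : Fin n) : ℕ) % 2 = r) <;>
          simp [hA, hB]
    · by_cases hl : (t : ℕ) + 1 = n
      · rw [sum_filter_combo _ t (⟨n - 2, by omega⟩ : Fin n) (⟨0, by omega⟩ : Fin n) 1 _
          (fun s => by rw [wv_decomp_last hn t hl s]; ring)]
        have hBC : (if ((⟨n - 2, by omega⟩ : Fin n) : ℕ) % 2 = r then (1:ℤ) else 0)
            = (if ((⟨0, by omega⟩ : Fin n) : ℕ) % 2 = r then (1:ℤ) else 0) :=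
          if_congr (by simp only []; omega) rfl rfl
        rw [hBC]
        by_cases hA : ((t : ℕ) % 2 = r) <;>
          by_cases hB : (((⟨0, by omega⟩ : Fin n) : ℕ) % 2 = r) <;>
            simp [hA, hB]
      · rw [sum_filter_combo _ t (⟨(t : ℕ) - 1, by omega⟩ : Fin n) (⟨(t : ℕ) + 1, by omega⟩ : Fin n) (-1) _
          (fun s => by rw [wv_decomp_mid t (by omega) (by omega) s]; ring)]
        have hBC : (if ((⟨(t : ℕ) - 1, by omega⟩ : Fin n) : ℕ) % 2 = r then (1:ℤ) else 0)
            = (if ((⟨(t : ℕ) + 1, by omega⟩ : Fin n) : ℕ) % 2 = r then (1:ℤ) else 0) :=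
          if_congr (by simp only []; omega) rfl rfl
        rw [hBC]
        by_cases hA : ((t : ℕ) % 2 = r) <;>
          by_cases hB : (((⟨(t : ℕ) + 1, by omega⟩ : Fin n) : ℕ) % 2 = r) <;>
            simp [hA, hB] <;> omega
  obtain ⟨k, hk⟩ := main
  rw [hk]
  push_cast
  rw [show ((2:ZMod 2) = 0) by decide]
  ring

end Aux6

section Aux7
variable {n m : ℕ}

lemma habs (d : ℚ) (hd : d = 0 ∨ 1 ≤ |d|) :
    2 * |d + 1| + 2 * |d - 1| - 4 * |d| = if d = 0 then 4 else 0 := by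
  rcases hd with rfl | hd
  · norm_num
  · rcases le_abs.mp hd with h | h
    · rw [abs_of_nonneg (by linarith : (0:ℚ) ≤ d + 1), abs_of_nonneg (by linarith : (0:ℚ) ≤ d - 1),
        abs_of_nonneg (by linarith : (0:ℚ) ≤ d), if_neg (by intro h'; rw [h'] at h; linarith)]
      ring
    · rw [abs_of_nonpos (by linarith : d + 1 ≤ 0), abs_of_nonpos (by linarith : d - 1 ≤ 0),
        abs_of_nonpos (by linarith : d ≤ 0), if_neg (by intro h'; rw [h'] at h; linarith)]
      ring

lemma cast_abs_ge {a b : ℕ} (h : a ≠ b) : 1 ≤ |(a : ℚ) - (b : ℚ)| := by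
  rcases lt_or_gt_of_ne h with hab | hab
  · have h1 : (a : ℚ) ≤ (b : ℚ) := by exact_mod_cast hab.le
    rw [abs_of_nonpos (sub_nonpos.mpr h1)]
    have : (a : ℚ) + 1 ≤ (b : ℚ) := by exact_mod_cast hab
    linarith
  · have h1 : (b : ℚ) ≤ (a : ℚ) := by exact_mod_cast hab.le
    rw [abs_of_nonneg (sub_nonneg.mpr h1)]
    have : (b : ℚ) + 1 ≤ (a : ℚ) := by exact_mod_cast hab
    linarith

lemma sum_mul_ind (c : Fin n → ℚ) (e : Fin n) :
    ∑ s : Fin n, c s * (if s = e then (1:ℚ) else 0) = c e := by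
  have h : ∀ s : Fin n, c s * (if s = e then (1:ℚ) else 0) = (if s = e then c s else 0) := by
    intro s; by_cases hs : s = e <;> simp [hs]
  rw [Finset.sum_congr rfl fun s _ => h s, sum_if_eq]

/-- The crucial identity: `wv t` pairs with the Gram rows to give `4·δ`. -/
lemma key_sum (hn : 4 ≤ n) (t j : Fin n) :
    ∑ s : Fin n, ((n : ℚ) - 2 * |((j : ℕ) : ℚ) - ((s : ℕ) : ℚ)|) * ((wv n t s : ℤ) : ℚ)
      = if j = t then 4 else 0 := by
  have ht := t.isLt
  have hj := j.isLt
  set c : Fin n → ℚ := fun s => (n : ℚ) - 2 * |((j : ℕ) : ℚ) - ((s : ℕ) : ℚ)| with hc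
  have main : ∀ (e1 e2 e3 : Fin n) (c3 : ℚ),
      (∀ s : Fin n, ((wv n t s : ℤ) : ℚ) = 2 * (if s = e1 then 1 else 0)
        - (if s = e2 then 1 else 0) + c3 * (if s = e3 then 1 else 0)) →
      ∑ s : Fin n, c s * ((wv n t s : ℤ) : ℚ) = 2 * c e1 - c e2 + c3 * c e3 := by
    intro e1 e2 e3 c3 hf
    have key : ∀ s : Fin n, c s * ((wv n t s : ℤ) : ℚ)
        = 2 * (c s * (if s = e1 then 1 else 0)) - c s * (if s = e2 then 1 else 0)
          + c3 * (c s * (if s = e3 then 1 else 0)) := by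
      intro s; rw [hf s]; ring
    rw [Finset.sum_congr rfl fun s _ => key s, Finset.sum_add_distrib, Finset.sum_sub_distrib,
      ← Finset.mul_sum, ← Finset.mul_sum, sum_mul_ind, sum_mul_ind, sum_mul_ind]
  have hNval : ((n : ℕ) : ℚ) - 1 ≥ 3 := by
    have : ((4:ℕ) : ℚ) ≤ ((n : ℕ) : ℚ) := by exact_mod_cast hn
    push_cast at this ⊢
    linarith
  have hjle : ((j : ℕ) : ℚ) ≤ ((n : ℕ) : ℚ) - 1 := by
    have : ((j : ℕ) : ℚ) + 1 ≤ ((n : ℕ) : ℚ) := by exact_mod_cast hj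
    linarith
  have hjnn : (0:ℚ) ≤ ((j : ℕ) : ℚ) := Nat.cast_nonneg _
  by_cases h0 : (t : ℕ) = 0
  · rw [main t (⟨1, by omega⟩ : Fin n) (⟨n - 1, by omega⟩ : Fin n) 1
      (fun s => by rw [wv_decomp_zero hn t h0 s]; push_cast [apply_ite (fun z : ℤ => (z : ℚ))]; ring)]
    have hcast1 : (((⟨n - 1, by omega⟩ : Fin n) : ℕ) : ℚ) = ((n : ℕ) : ℚ) - 1 := by
      show (((n - 1 : ℕ)) : ℚ) = _
      have : 1 ≤ n := by omega
      push_cast [Nat.cast_sub this]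
      ring
    have hcast2 : (((⟨1, by omega⟩ : Fin n) : ℕ) : ℚ) = 1 := by norm_num
    have htval : (((t : ℕ)) : ℚ) = 0 := by rw [h0]; norm_num
    rw [hc]
    simp only [hcast1, hcast2, htval]
    have habs3 : |((j : ℕ) : ℚ) - (((n : ℕ) : ℚ) - 1)| = ((n : ℕ) : ℚ) - 1 - ((j : ℕ) : ℚ) := by
      rw [abs_of_nonpos (by linarith)]; ring
    by_cases hj0 : (j : ℕ) = 0
    · rw [if_pos (by rw [Fin.ext_iff, h0, hj0])]
      have hjval : (((j : ℕ)) : ℚ) = 0 := by rw [hj0]; norm_num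
      rw [habs3, hjval]
      norm_num
      try ring
    · rw [if_neg (by rw [Fin.ext_iff, h0]; exact hj0)]
      have hj1 : (1:ℚ) ≤ ((j : ℕ) : ℚ) := by exact_mod_cast Nat.one_le_iff_ne_zero.mpr hj0
      rw [habs3, abs_of_nonneg (by linarith : (0:ℚ) ≤ ((j : ℕ) : ℚ) - 0),
        abs_of_nonneg (by linarith : (0:ℚ) ≤ ((j : ℕ) : ℚ) - 1)]
      ring
  · by_cases hl : (t : ℕ) + 1 = n
    · rw [main t (⟨n - 2, by omega⟩ : Fin n) (⟨0, by omega⟩ : Fin n) 1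
        (fun s => by rw [wv_decomp_last hn t hl s]; push_cast [apply_ite (fun z : ℤ => (z : ℚ))]; ring)]
      have hcast1 : (((⟨n - 2, by omega⟩ : Fin n) : ℕ) : ℚ) = ((n : ℕ) : ℚ) - 2 := by
        show (((n - 2 : ℕ)) : ℚ) = _
        have : 2 ≤ n := by omega
        push_cast [Nat.cast_sub this]
        ring
      have hcast2 : (((⟨0, by omega⟩ : Fin n) : ℕ) : ℚ) = 0 := by norm_num
      have htval : (((t : ℕ)) : ℚ) = ((n : ℕ) : ℚ) - 1 := by
        have : (((t : ℕ) : ℚ)) + 1 = ((n : ℕ) : ℚ) := by exact_mod_cast hl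
        linarith
      rw [hc]
      simp only [hcast1, hcast2, htval]
      have habs0 : |((j : ℕ) : ℚ) - 0| = ((j : ℕ) : ℚ) := by
        rw [sub_zero, abs_of_nonneg hjnn]
      have habst : |((j : ℕ) : ℚ) - (((n : ℕ) : ℚ) - 1)| = ((n : ℕ) : ℚ) - 1 - ((j : ℕ) : ℚ) := by
        rw [abs_of_nonpos (by linarith)]; ring
      by_cases hjt : (j : ℕ) = (t : ℕ)
      · rw [if_pos (Fin.ext hjt)]
        have hjval : (((j : ℕ)) : ℚ) = ((n : ℕ) : ℚ) - 1 := by rw [hjt]; exact htval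
        have habs2 : |((j : ℕ) : ℚ) - (((n : ℕ) : ℚ) - 2)| = 1 := by
          rw [hjval, show ((n:ℕ):ℚ) - 1 - (((n:ℕ):ℚ) - 2) = 1 by ring]
          norm_num
        rw [habs0, habst, habs2, hjval]
        ring
      · rw [if_neg (fun hc' => hjt (by rw [hc']))]
        have hjle2 : ((j : ℕ) : ℚ) ≤ ((n : ℕ) : ℚ) - 2 := by
          have : (j : ℕ) + 2 ≤ n := by omega
          have h2 : (((j : ℕ) : ℚ)) + 2 ≤ ((n : ℕ) : ℚ) := by exact_mod_cast this
          linarith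
        have habs2 : |((j : ℕ) : ℚ) - (((n : ℕ) : ℚ) - 2)| = ((n : ℕ) : ℚ) - 2 - ((j : ℕ) : ℚ) := by
          rw [abs_of_nonpos (by linarith)]; ring
        rw [habs0, habst, habs2]
        ring
    · have h1 : 1 ≤ (t : ℕ) := by omega
      have h2 : (t : ℕ) + 2 ≤ n := by omega
      rw [main t (⟨(t : ℕ) - 1, by omega⟩ : Fin n) (⟨(t : ℕ) + 1, by omega⟩ : Fin n) (-1)
        (fun s => by rw [wv_decomp_mid t h1 h2 s]; push_cast [apply_ite (fun z : ℤ => (z : ℚ))]; ring)]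
      have hcast1 : (((⟨(t : ℕ) - 1, by omega⟩ : Fin n) : ℕ) : ℚ) = ((t : ℕ) : ℚ) - 1 := by
        show (((t : ℕ) - 1 : ℕ) : ℚ) = _
        push_cast [Nat.cast_sub h1]
        ring
      have hcast2 : (((⟨(t : ℕ) + 1, by omega⟩ : Fin n) : ℕ) : ℚ) = ((t : ℕ) : ℚ) + 1 := by
        show (((t : ℕ) + 1 : ℕ) : ℚ) = _
        push_cast
        ring
      rw [hc]
      simp only [hcast1, hcast2]
      set d : ℚ := ((j : ℕ) : ℚ) - ((t : ℕ) : ℚ) with hd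
      have e1 : ((j : ℕ) : ℚ) - (((t : ℕ) : ℚ) - 1) = d + 1 := by rw [hd]; ring
      have e2 : ((j : ℕ) : ℚ) - (((t : ℕ) : ℚ) + 1) = d - 1 := by rw [hd]; ring
      rw [e1, e2]
      have hiff : (j = t) ↔ (d = 0) := by
        rw [Fin.ext_iff, hd, sub_eq_zero]
        exact ⟨fun h => by exact_mod_cast h, fun h => by exact_mod_cast h⟩
      have harith : 2 * (((n : ℕ) : ℚ) - 2 * |d|) - (((n : ℕ) : ℚ) - 2 * |d + 1|)
          + (-1) * (((n : ℕ) : ℚ) - 2 * |d - 1|) = 2 * |d + 1| + 2 * |d - 1| - 4 * |d| := by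
        ring
      rw [harith, habs d ?side]
      · by_cases hjt : j = t
        · rw [if_pos hjt, if_pos (hiff.mp hjt)]
        · rw [if_neg hjt, if_neg (fun h => hjt (hiff.mpr h))]
      · by_cases hjt : j = t
        · left; exact hiff.mp hjt
        · right
          rw [hd]
          exact cast_abs_ge (fun h => hjt (Fin.ext h))

end Aux7
section Aux8
open scoped Classical
variable {n m : ℕ}

def yv (n m : ℕ) (i : Fin m) (t : Fin n) : Fin m → Fin n → ℤ :=
  fun i' s => if i' = i then wv n t s else 0

lemma rho_yv (hn4 : 4 ∣ n) (hn : 4 ≤ n) (i : Fin m) (t : Fin n) :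
    rhoDev n m (yv n m i t) = 0 := by
  funext i'
  show rhoDev n m (yv n m i t) i' = 0
  rw [rho_eq_zero_iff]
  constructor
  · rw [aD]
    by_cases h : i' = i
    · subst h
      show ((∑ j ∈ Finset.univ.filter (fun j : Fin n => (j : ℕ) % 2 = 0),
          (if i' = i' then wv n t j else 0) : ℤ) : ZMod 2) = 0
      simp only [if_true]
      exact wv_parity hn4 hn t 0
    · simp [yv, h]
  · rw [bD]
    by_cases h : i' = i
    · subst h
      show ((∑ j ∈ Finset.univ.filter (fun j : Fin n => (j : ℕ) % 2 = 1),
          (if i' = i' then wv n t j else 0) : ℤ) : ZMod 2) = 0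
      simp only [if_true]
      exact wv_parity hn4 hn t 1
    · simp [yv, h]

lemma B_z_yv (hn : 4 ≤ n) (z : Fin m → Fin n → ℚ) (i : Fin m) (t : Fin n) :
    BDev n m z (toQD n m (yv n m i t)) = z i t := by
  rw [BDev]
  rw [Finset.sum_eq_single i ?h1 (by simp)]
  · have inner : ∀ j : Fin n,
        ∑ s : Fin n, (1 / 4) * ((n : ℚ) - 2 * |((j : ℕ) : ℚ) - ((s : ℕ) : ℚ)|) * z i j
            * toQD n m (yv n m i t) i s
        = (if j = t then z i j else 0) := by
      intro j
      have hterm : ∀ s : Fin n, (1 / 4) * ((n : ℚ) - 2 * |((j : ℕ) : ℚ) - ((s : ℕ) : ℚ)|) * z i j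
            * toQD n m (yv n m i t) i s
          = (z i j * (1/4)) * (((n : ℚ) - 2 * |((j : ℕ) : ℚ) - ((s : ℕ) : ℚ)|) * ((wv n t s : ℤ) : ℚ)) := by
        intro s
        rw [toQD, yv]
        simp only [if_true]
        push_cast
        ring
      rw [Finset.sum_congr rfl fun s _ => hterm s, ← Finset.mul_sum, key_sum hn t j]
      by_cases hjt : j = t
      · rw [if_pos hjt, if_pos hjt]; ring
      · rw [if_neg hjt, if_neg hjt]; ring
    rw [Finset.sum_congr rfl fun j _ => inner j, sum_if_eq]
  · intro i' _ hne
    refine Finset.sum_eq_zero fun j _ => Finset.sum_eq_zero fun s _ => ?_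
    rw [toQD, yv]
    simp [hne]

lemma wtHR_eq_card (w : Fin m → R2) :
    wtHR m w = (Finset.univ.filter (fun i => w i ≠ 0)).card := by
  classical
  rw [wtHR, N1R]
  have hsplit : N0R m w + (Finset.univ.filter (fun i => w i ≠ 0)).card = m := by
    rw [N0R]
    rw [Finset.card_filter_add_card_filter_not (fun i => w i = 0)]
    · simp
  have hN2le : N2R m w ≤ (Finset.univ.filter (fun i => w i ≠ 0)).card := by
    rw [N2R]
    apply Finset.card_le_card
    intro i hi
    simp only [Finset.mem_filter] at hi ⊢
    refine ⟨hi.1, ?_⟩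
    rw [hi.2]
    intro hc
    have := congrArg TrivSqZeroExt.snd hc
    simp at this
  omega

def critD (n m : ℕ) (x : Fin m → Fin n → ℤ) : ZMod 2 :=
  ∑ i, (aD n m x i + bD n m x i + aD n m x i * bD n m x i)

lemma crit_eq_wt (x : Fin m → Fin n → ℤ) :
    critD n m x = ((wtHR m (rhoDev n m x) : ℕ) : ZMod 2) := by
  classical
  rw [critD, wtHR_eq_card]
  have hterm : ∀ i, (aD n m x i + bD n m x i + aD n m x i * bD n m x i)
      = (if rhoDev n m x i ≠ 0 then (1 : ZMod 2) else 0) := by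
    intro i
    by_cases h : rhoDev n m x i = 0
    · obtain ⟨ha, hb⟩ := (rho_eq_zero_iff x i).mp h
      simp [h, ha, hb]
    · rw [if_pos h]
      have hnot : ¬ (aD n m x i = 0 ∧ bD n m x i = 0) := fun hc =>
        h ((rho_eq_zero_iff x i).mpr hc)
      revert hnot
      generalize aD n m x i = a
      generalize bD n m x i = b
      revert a b
      decide
  rw [Finset.sum_congr rfl fun i _ => hterm i]
  rw [← Finset.sum_filter]
  simp

lemma crit_zero_iff (x : Fin m → Fin n → ℤ) :
    critD n m x = 0 ↔ 2 ∣ wtHR m (rhoDev n m x) := by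
  rw [crit_eq_wt]
  exact ZMod.natCast_eq_zero_iff _ 2

lemma crit_add (x y : Fin m → Fin n → ℤ) :
    critD n m (x + y) = critD n m x + critD n m y
      + ∑ i, (aD n m x i * bD n m y i + bD n m x i * aD n m y i) := by
  rw [critD, critD, critD, ← Finset.sum_add_distrib, ← Finset.sum_add_distrib]
  refine Finset.sum_congr rfl fun i _ => ?_
  rw [aD_add, bD_add]
  generalize aD n m x i = a
  generalize bD n m x i = b
  generalize aD n m y i = a'
  generalize bD n m y i = b'
  revert a b a' b'
  decide

end Aux8
section Main
variable {n m : ℕ}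

lemma eps_mul_snd (w : R2) : (DualNumber.eps * w).snd = w.fst := by
  simp [TrivSqZeroExt.snd_mul]

lemma mem_Gamma_iff (C : Set (Fin m → R2)) (x : Fin m → Fin n → ℤ) :
    x ∈ GammaDev n m C ↔ rhoDev n m x ∈ C := Iff.rfl

set_option synthInstance.maxHeartbeats 1000000 in
/-- If `x` pairs integrally with all of `Γ_C`, then `ρ(x)` lies in the dual code. -/
lemma rho_mem_dual (hn : 4 ≤ n) (hn4 : 4 ∣ n) (C : Submodule R2 (Fin m → R2))
    (x : Fin m → Fin n → ℤ)
    (hx : ∀ y ∈ GammaDev n m (C : Set _), ∃ k : ℤ, (k : ℚ) = BDev n m (toQD n m x) (toQD n m y)) :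
    rhoDev n m x ∈ dualCodeR m (C : Set _) := by
  intro v hv
  obtain ⟨y, hy⟩ := rho_surj (n := n) (m := m) (by omega) v
  obtain ⟨y', hy'⟩ := rho_surj (n := n) (m := m) (by omega) ((DualNumber.eps : R2) • v)
  have h1 : y ∈ GammaDev n m (C : Set _) := by rw [mem_Gamma_iff, hy]; exact hv
  have h2 : y' ∈ GammaDev n m (C : Set _) := by
    rw [mem_Gamma_iff, hy']; exact C.smul_mem _ hv
  have k1 : (∑ i, rhoDev n m x i * rhoDev n m y i).snd = 0 := by
    rw [dot_snd]; exact (int_iff hn4 x y).mp (hx y h1)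
  have k2 : (∑ i, rhoDev n m x i * rhoDev n m y' i).snd = 0 := by
    rw [dot_snd]; exact (int_iff hn4 x y').mp (hx y' h2)
  rw [hy] at k1
  rw [hy'] at k2
  have key : ∑ i, rhoDev n m x i * ((DualNumber.eps : R2) • v) i
      = DualNumber.eps * ∑ i, rhoDev n m x i * v i := by
    rw [Finset.mul_sum]
    refine Finset.sum_congr rfl fun i _ => ?_
    rw [Pi.smul_apply, smul_eq_mul]
    ring
  rw [key, eps_mul_snd] at k2
  rw [R2_ext_iff]
  exact ⟨k2, k1⟩

lemma Gamma_eq_iff (hn : 4 ≤ n) (C₁ C₂ : Set (Fin m → R2)) :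
    GammaDev n m C₁ = GammaDev n m C₂ ↔ C₁ = C₂ := by
  constructor
  · intro h
    ext w
    obtain ⟨x, hx⟩ := rho_surj (n := n) (m := m) (by omega) w
    constructor
    · intro hw
      have : x ∈ GammaDev n m C₁ := by rw [mem_Gamma_iff, hx]; exact hw
      rw [h, mem_Gamma_iff, hx] at this; exact this
    · intro hw
      have : x ∈ GammaDev n m C₂ := by rw [mem_Gamma_iff, hx]; exact hw
      rw [← h, mem_Gamma_iff, hx] at this; exact this
  · intro h; rw [h]

lemma toQD_inj (x y : Fin m → Fin n → ℤ) (h : toQD n m x = toQD n m y) : x = y := by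
  funext i j
  have := congrFun (congrFun h i) j
  rw [toQD, toQD] at this
  exact_mod_cast this

/-- The dual lattice of `Γ_C` is `Γ_{C^⊥}`. -/
lemma dualLattice_eq (hn : 4 ≤ n) (hn4 : 4 ∣ n) (C : Submodule R2 (Fin m → R2)) :
    dualLatticeDev n m (C : Set _) = toQD n m '' GammaDev n m (dualCodeR m (C : Set _)) := by
  ext z
  constructor
  · intro hz
    have hint : ∀ (i : Fin m) (t : Fin n), ∃ k : ℤ, (k : ℚ) = z i t := by
      intro i t
      have hmem : yv n m i t ∈ GammaDev n m (C : Set _) := by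
        rw [mem_Gamma_iff, rho_yv hn4 hn]
        exact C.zero_mem
      obtain ⟨k, hk⟩ := hz (yv n m i t) hmem
      exact ⟨k, by rw [hk, B_z_yv hn]⟩
    choose xf hxf using hint
    have hz_eq : z = toQD n m xf := by
      funext i t
      rw [toQD, hxf i t]
    refine ⟨xf, ?_, hz_eq.symm⟩
    rw [mem_Gamma_iff]
    refine rho_mem_dual hn hn4 C xf fun y hy => ?_
    rw [← hz_eq]
    exact hz y hy
  · rintro ⟨x, hx, rfl⟩
    intro y hy
    rw [mem_Gamma_iff] at hx hy
    have h0 : ∑ i, rhoDev n m x i * rhoDev n m y i = 0 := hx (rhoDev n m y) hy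
    refine (int_iff hn4 x y).mpr ?_
    rw [← dot_snd, h0]
    rfl

end Main
theorem stmt12 (n m : ℕ) (hn : 4 ≤ n) (hn4 : 4 ∣ n) (hn8 : ¬ (8 ∣ n))
    (hm : 0 < m) (C : Submodule R2 (Fin m → R2)) :
    (IsIntegralDev n m (C : Set _) ↔ (C : Set _) ⊆ dualCodeR m (C : Set _)) ∧
    (IsUnimodularDev n m (C : Set _) ↔ (C : Set _) = dualCodeR m (C : Set _)) ∧
    (IsEvenLatDev n m (C : Set _) ↔ ∀ w ∈ C, 2 ∣ wtHR m w) ∧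
    ((IsEvenLatDev n m (C : Set _) ∧ IsUnimodularDev n m (C : Set _)) ↔
      ((C : Set _) = dualCodeR m (C : Set _) ∧ ∀ w ∈ C, 2 ∣ wtHR m w)) := by
  have part1 : IsIntegralDev n m (C : Set _) ↔ (C : Set _) ⊆ dualCodeR m (C : Set _) := by
    constructor
    · intro h w hw
      obtain ⟨x, hx⟩ := rho_surj (n := n) (m := m) (by omega) w
      have hxg : x ∈ GammaDev n m (C : Set _) := by rw [mem_Gamma_iff, hx]; exact hw
      rw [← hx]
      exact rho_mem_dual hn hn4 C x (fun y hy => h x hxg y hy)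
    · intro h x hxg y hyg
      rw [mem_Gamma_iff] at hxg hyg
      have h0 : ∑ i, rhoDev n m x i * rhoDev n m y i = 0 := h hxg (rhoDev n m y) hyg
      exact (int_iff hn4 x y).mpr (by rw [← dot_snd, h0]; rfl)
  have part2 : IsUnimodularDev n m (C : Set _) ↔ (C : Set _) = dualCodeR m (C : Set _) := by
    rw [IsUnimodularDev, dualLattice_eq hn hn4 C]
    constructor
    · intro h
      have hG : GammaDev n m (dualCodeR m (C : Set _)) = GammaDev n m (C : Set _) := by
        ext x
        constructor
        · intro hx
          have hmem : toQD n m x ∈ toQD n m '' GammaDev n m (C : Set _) := by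
            rw [← h]; exact ⟨x, hx, rfl⟩
          obtain ⟨x', hx', he⟩ := hmem
          rwa [← toQD_inj x' x he]
        · intro hx
          have hmem : toQD n m x ∈ toQD n m '' GammaDev n m (dualCodeR m (C : Set _)) := by
            rw [h]; exact ⟨x, hx, rfl⟩
          obtain ⟨x', hx', he⟩ := hmem
          rwa [← toQD_inj x' x he]
      exact ((Gamma_eq_iff hn _ _).mp hG).symm
    · intro h
      rw [← h]
  have part3 : IsEvenLatDev n m (C : Set _) ↔ ∀ w ∈ C, 2 ∣ wtHR m w := by
    constructor
    · rintro ⟨hint, heven⟩ w hw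
      obtain ⟨x, hx⟩ := rho_surj (n := n) (m := m) (by omega) w
      have hxg : x ∈ GammaDev n m (C : Set _) := by rw [mem_Gamma_iff, hx]; exact hw
      have hcrit := (even_iff hn4 hn8 x).mp (heven x hxg)
      rw [← hx]
      exact (crit_zero_iff x).mp hcrit
    · intro hwt
      have hcrit : ∀ x ∈ GammaDev n m (C : Set _), critD n m x = 0 := by
        intro x hx
        rw [mem_Gamma_iff] at hx
        exact (crit_zero_iff x).mpr (hwt _ hx)
      constructor
      · intro x hxg y hyg
        refine (int_iff hn4 x y).mpr ?_
        have hxy : x + y ∈ GammaDev n m (C : Set _) := by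
          rw [mem_Gamma_iff, rho_add]
          exact C.add_mem hxg hyg
        have hadd := crit_add x y
        rw [hcrit _ hxg, hcrit _ hyg, hcrit _ hxy] at hadd
        simpa using hadd.symm
      · intro x hxg
        exact (even_iff hn4 hn8 x).mpr (hcrit x hxg)
  exact ⟨part1, part2, part3,
    ⟨fun ⟨he, hu⟩ => ⟨part2.mp hu, part3.mp he⟩,
     fun ⟨h1, h2⟩ => ⟨part3.mpr h2, part2.mpr h1⟩⟩⟩
end
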